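/- arXiv:2310.06573 — 8 statements merged into one kernel-verified Lean document; each statement's English description precedes it below -/
import Mathlib

section
/- For every x with 0 ≤ x ≤ L, c_e(x,0) = c_I; that is, the analytical electrolyte concentration satisfies the constant initial condition c_e(x,0) = c_I on [0,L]. -/
open Real

private lemma hB_aux (u : ℝ) :
    (Polynomial.aeval u) (Polynomial.bernoulli 2) = u ^ 2 - u + 1 / 6 := by
  simp [Polynomial.bernoulli, Finset.sum_range_succ, map_sum]
  norm_num [bernoulli_eq_bernoulli'_of_ne_one, bernoulli'_two, bernoulli'_one]
  ring

private lemma full_aux (u : ℝ) (h0 : 0 ≤ u) (h1 : u ≤ 1) :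
    HasSum (fun n : ℕ => 1 / (n : ℝ) ^ 2 * Real.cos (2 * π * n * u))
      (π ^ 2 * (u ^ 2 - u + 1 / 6)) := by
  have := hasSum_one_div_nat_pow_mul_cos (k := 1) one_ne_zero (Set.mem_Icc.mpr ⟨h0, h1⟩)
  norm_num [Nat.factorial] at this
  rw [hB_aux] at this
  convert this using 2 with n
  · rw [one_div]
  · ring

private lemma oddcos_aux (y : ℝ) (h0 : 0 ≤ y) (h1 : y ≤ 1) :
    HasSum (fun k : ℕ => 1 / ((2 * (k : ℝ) + 1) ^ 2) * Real.cos ((2 * (k : ℝ) + 1) * π * y))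
      (π ^ 2 * (1 / 8 - y / 4)) := by
  set f : ℕ → ℝ := fun n : ℕ => 1 / (n : ℝ) ^ 2 * Real.cos (2 * π * n * (y / 2)) with hf
  have hfull : HasSum f (π ^ 2 * ((y / 2) ^ 2 - y / 2 + 1 / 6)) :=
    full_aux (y / 2) (by linarith) (by linarith)
  have heven : HasSum (fun k : ℕ => f (2 * k)) (π ^ 2 * (y ^ 2 - y + 1 / 6) / 4) := by
    have h2 := (full_aux y h0 h1).div_const 4
    have hk : ∀ k : ℕ, f (2 * k) = 1 / (k : ℝ) ^ 2 * Real.cos (2 * π * k * y) / 4 := by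
      intro k
      simp only [hf]
      push_cast
      rw [show 2 * π * (2 * (k : ℝ)) * (y / 2) = 2 * π * k * y by ring,
        show (2 * (k : ℝ)) ^ 2 = (k : ℝ) ^ 2 * 4 by ring, ← div_div]
      ring
    simpa only [hk] using h2
  have hodd_summable : Summable (fun k : ℕ => f (2 * k + 1)) :=
    hfull.summable.comp_injective (fun a b hab => by omega)
  have hodd := hodd_summable.hasSum
  have huniq := (heven.even_add_odd hodd).unique hfull
  have hval : (∑' k : ℕ, f (2 * k + 1)) = π ^ 2 * (1 / 8 - y / 4) := by
    nlinarith [huniq]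
  rw [hval] at hodd
  have hg : ∀ k : ℕ, f (2 * k + 1)
      = 1 / ((2 * (k : ℝ) + 1) ^ 2) * Real.cos ((2 * (k : ℝ) + 1) * π * y) := by
    intro k
    simp only [hf]
    push_cast
    rw [show 2 * π * (2 * (k : ℝ) + 1) * (y / 2) = (2 * (k : ℝ) + 1) * π * y by ring]
  simpa only [hg] using hodd

/-- The analytical electrolyte concentration of the 1D LIB half-cell in
galvanostatic mode satisfies the constant initial condition `c_e(x,0) = c_I`
on `[0,L]`. -/
theorem stmt_2 (L D β cI : ℝ) (hL : 0 < L) (hD : 0 < D)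
    (ce : ℝ × ℝ → ℝ)
    (hce : ∀ x t : ℝ, ce (x, t) =
      cI + β * (L / 2 - x) -
        4 * β * L *
          ∑' k : ℕ, (1 / ((2 * (k : ℝ) + 1) ^ 2 * Real.pi ^ 2)) *
            Real.cos ((2 * (k : ℝ) + 1) * Real.pi * x / L) *
            Real.exp (-(((2 * (k : ℝ) + 1) * Real.pi / L) ^ 2 * D * t))) :
    ∀ x : ℝ, 0 ≤ x → x ≤ L → ce (x, 0) = cI := by
  intro x hx0 hxL
  have hπ : (π : ℝ) ≠ 0 := Real.pi_ne_zero
  have hLne : L ≠ 0 := hL.ne'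
  have hy0 : 0 ≤ x / L := div_nonneg hx0 hL.le
  have hy1 : x / L ≤ 1 := (div_le_one hL).mpr hxL
  have hodd := (oddcos_aux (x / L) hy0 hy1).mul_left (1 / π ^ 2)
  have hterm : ∀ k : ℕ,
      (1 / ((2 * (k : ℝ) + 1) ^ 2 * Real.pi ^ 2)) *
        Real.cos ((2 * (k : ℝ) + 1) * Real.pi * x / L) *
        Real.exp (-(((2 * (k : ℝ) + 1) * Real.pi / L) ^ 2 * D * 0))
      = 1 / π ^ 2 * (1 / ((2 * (k : ℝ) + 1) ^ 2) *
          Real.cos ((2 * (k : ℝ) + 1) * π * (x / L))) := by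
    intro k
    rw [mul_zero, neg_zero, Real.exp_zero, mul_one, mul_div_assoc]
    rw [one_div, mul_inv]
    ring
  have htsum : (∑' k : ℕ, (1 / ((2 * (k : ℝ) + 1) ^ 2 * Real.pi ^ 2)) *
        Real.cos ((2 * (k : ℝ) + 1) * Real.pi * x / L) *
        Real.exp (-(((2 * (k : ℝ) + 1) * Real.pi / L) ^ 2 * D * 0)))
      = 1 / π ^ 2 * (π ^ 2 * (1 / 8 - x / L / 4)) := by
    rw [tsum_congr hterm]
    exact hodd.tsum_eq
  rw [hce x 0, htsum]
  have hπ2 : (π : ℝ) ^ 2 ≠ 0 := pow_ne_zero 2 hπ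
  field_simp
  ring
end

section
/- For every x ∈ (0,L) and every t > 0, the function c_e is differentiable in time and twice differentiable in space at (x,t), and it satisfies the diffusion equation ∂c_e/∂t (x,t) = D ∂²c_e/∂x² (x,t). -/
open Real Filter

namespace Stmt3Aux

/-- Term-by-term differentiation of a series under a uniform bound on an open set. -/
lemma hasDerivAt_tsum_on {f f' : ℕ → ℝ → ℝ} {s : Set ℝ} (hs : IsOpen s)
    {u : ℕ → ℝ} (hu : Summable u)
    (hf : ∀ n, ∀ y ∈ s, HasDerivAt (f n) (f' n y) y)
    (hbd : ∀ n, ∀ y ∈ s, ‖f' n y‖ ≤ u n)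
    (hsum : ∀ y ∈ s, Summable fun n => f n y)
    {x : ℝ} (hx : x ∈ s) :
    HasDerivAt (fun y => ∑' n, f n y) (∑' n, f' n x) x := by
  have hU : TendstoUniformlyOn (fun N y => ∑ n ∈ Finset.range N, f' n y)
      (fun y => ∑' n, f' n y) atTop s :=
    tendstoUniformlyOn_tsum_nat hu (fun n y hy => hbd n y hy)
  exact hasDerivAt_of_tendstoUniformlyOn hs hU
    (Filter.Eventually.of_forall fun N y hy =>
      HasDerivAt.fun_sum fun i _ => hf i y hy)
    (fun y hy => (hsum y hy).hasSum.tendsto_sum_nat) hx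

noncomputable def B (L : ℝ) (k : ℕ) : ℝ := (2 * (k : ℝ) + 1) * Real.pi / L
noncomputable def A (k : ℕ) : ℝ := 1 / ((2 * (k : ℝ) + 1) ^ 2 * Real.pi ^ 2)
noncomputable def Ex (L D τ : ℝ) (k : ℕ) : ℝ := Real.exp (-(B L k ^ 2 * D * τ))

noncomputable def f0 (L D t : ℝ) (k : ℕ) (y : ℝ) : ℝ :=
  A k * Real.cos (B L k * y) * Ex L D t k
noncomputable def f1 (L D t : ℝ) (k : ℕ) (y : ℝ) : ℝ :=
  -(A k * B L k) * Real.sin (B L k * y) * Ex L D t k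
noncomputable def f2 (L D t : ℝ) (k : ℕ) (y : ℝ) : ℝ :=
  -(A k * B L k ^ 2) * Real.cos (B L k * y) * Ex L D t k
noncomputable def g0 (L D x : ℝ) (k : ℕ) (τ : ℝ) : ℝ :=
  A k * Real.cos (B L k * x) * Ex L D τ k
noncomputable def g1 (L D x : ℝ) (k : ℕ) (τ : ℝ) : ℝ :=
  -(A k * (B L k ^ 2 * D) * Real.cos (B L k * x)) * Ex L D τ k

variable {L D t x : ℝ}

lemma hB_pos (hL : 0 < L) (k : ℕ) : 0 < B L k := by
  have := Real.pi_pos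
  unfold B; positivity

lemma hA_pos (k : ℕ) : 0 < A k := by
  have := Real.pi_pos
  unfold A; positivity

lemma hEx_pos (k : ℕ) : 0 < Ex L D t k := Real.exp_pos _

lemma hAB (hL : 0 < L) (k : ℕ) : A k * B L k = 1 / ((2 * (k : ℝ) + 1) * Real.pi * L) := by
  have hπ := Real.pi_ne_zero
  have hk : (2 * (k : ℝ) + 1) ≠ 0 := by positivity
  unfold A B; field_simp

lemma hAB2 (hL : 0 < L) (k : ℕ) : A k * B L k ^ 2 = 1 / L ^ 2 := by
  have hπ := Real.pi_ne_zero
  have hk : (2 * (k : ℝ) + 1) ≠ 0 := by positivity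
  unfold A B; field_simp

lemma sumEx (hL : 0 < L) (hD : 0 < D) {ε : ℝ} (hε : 0 < ε) :
    Summable (fun k => Ex L D ε k) := by
  have hπ := Real.pi_pos
  set δ : ℝ := Real.pi ^ 2 / L ^ 2 * D * ε with hδdef
  have hδ : 0 < δ := by positivity
  have hgeo : Summable fun k : ℕ => Real.exp (-δ) ^ k :=
    summable_geometric_of_lt_one (Real.exp_pos _).le
      (by rw [← Real.exp_zero]; exact Real.exp_lt_exp.2 (by linarith))
  refine Summable.of_nonneg_of_le (fun k => (Real.exp_pos _).le) (fun k => ?_) hgeo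
  rw [← Real.exp_nat_mul]
  apply Real.exp_le_exp.2
  have hB2 : B L k ^ 2 * D * ε = (2 * (k : ℝ) + 1) ^ 2 * δ := by
    unfold B; rw [hδdef]; field_simp
  rw [hB2]
  have hk : (0 : ℝ) ≤ (k : ℝ) := Nat.cast_nonneg k
  nlinarith [sq_nonneg ((k : ℝ))]

lemma Ex_mono (hD : 0 < D) (hL : 0 < L) (k : ℕ) {σ τ : ℝ} (h : σ ≤ τ) :
    Ex L D τ k ≤ Ex L D σ k := by
  have hb := hB_pos hL k
  apply Real.exp_le_exp.2
  nlinarith [mul_nonneg (mul_nonneg (sq_nonneg (B L k)) hD.le) (sub_nonneg.2 h)]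

lemma hf0_deriv (k : ℕ) (y : ℝ) : HasDerivAt (f0 L D t k) (f1 L D t k y) y := by
  have h : HasDerivAt (fun z : ℝ => B L k * z) (B L k) y := by
    simpa using (hasDerivAt_id y).const_mul (B L k)
  have h2 := (h.cos.mul_const (Ex L D t k)).const_mul (A k)
  have hfun : f0 L D t k = fun z => A k * (Real.cos (B L k * z) * Ex L D t k) := by
    funext z; simp only [f0]; ring
  rw [hfun]
  refine h2.congr_deriv ?_
  simp only [f1]; ring

lemma hf1_deriv (k : ℕ) (y : ℝ) : HasDerivAt (f1 L D t k) (f2 L D t k y) y := by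
  have h : HasDerivAt (fun z : ℝ => B L k * z) (B L k) y := by
    simpa using (hasDerivAt_id y).const_mul (B L k)
  have h2 := (h.sin.mul_const (Ex L D t k)).const_mul (-(A k * B L k))
  have hfun : f1 L D t k = fun z => -(A k * B L k) * (Real.sin (B L k * z) * Ex L D t k) := by
    funext z; simp only [f1]; ring
  rw [hfun]
  refine h2.congr_deriv ?_
  simp only [f2]; ring

lemma hg0_deriv (k : ℕ) (τ : ℝ) : HasDerivAt (fun σ => g0 L D x k σ) (g1 L D x k τ) τ := by
  have h : HasDerivAt (fun σ : ℝ => -(B L k ^ 2 * D * σ)) (-(B L k ^ 2 * D)) τ := by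
    have := ((hasDerivAt_id τ).const_mul (B L k ^ 2 * D)).neg
    refine this.congr_deriv ?_; ring
  have h2 := h.exp.const_mul (A k * Real.cos (B L k * x))
  have hfun : (fun σ => g0 L D x k σ) =
      fun σ => A k * Real.cos (B L k * x) * Real.exp (-(B L k ^ 2 * D * σ)) := by
    funext σ; simp only [g0, Ex]
  rw [hfun]
  refine h2.congr_deriv ?_
  simp only [g1, Ex]; ring

lemma norm_f0_le (hL : 0 < L) (k : ℕ) (y : ℝ) :
    ‖f0 L D t k y‖ ≤ 1 / Real.pi ^ 2 * Ex L D t k := by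
  have hπ := Real.pi_pos
  have hA := hA_pos k
  have hE : (0:ℝ) < Ex L D t k := hEx_pos k
  have hcos := abs_cos_le_one (B L k * y)
  have hAle : A k ≤ 1 / Real.pi ^ 2 := by
    unfold A
    rw [show (1:ℝ) / Real.pi ^ 2 = 1 / (1 * Real.pi ^ 2) by ring]
    apply one_div_le_one_div_of_le (by positivity)
    have hk : (0 : ℝ) ≤ (k : ℝ) := Nat.cast_nonneg k
    nlinarith [sq_nonneg ((k:ℝ)), sq_nonneg Real.pi]
  rw [Real.norm_eq_abs]
  simp only [f0]
  rw [abs_mul, abs_mul, abs_of_pos hA, abs_of_pos hE]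
  calc A k * |Real.cos (B L k * y)| * Ex L D t k
      ≤ 1 / Real.pi ^ 2 * 1 * Ex L D t k := by gcongr
    _ = 1 / Real.pi ^ 2 * Ex L D t k := by ring

lemma norm_f1_le (hL : 0 < L) (k : ℕ) (y : ℝ) :
    ‖f1 L D t k y‖ ≤ 1 / (Real.pi * L) * Ex L D t k := by
  have hπ := Real.pi_pos
  have hA := hA_pos k
  have hB := hB_pos hL k
  have hE : (0:ℝ) < Ex L D t k := hEx_pos k
  have hsin := abs_sin_le_one (B L k * y)
  have hABle : A k * B L k ≤ 1 / (Real.pi * L) := by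
    rw [hAB hL k]
    apply one_div_le_one_div_of_le (by positivity)
    have hk : (0 : ℝ) ≤ (k : ℝ) := Nat.cast_nonneg k
    nlinarith [mul_nonneg (mul_nonneg hk hπ.le) hL.le]
  rw [Real.norm_eq_abs]
  simp only [f1]
  rw [abs_mul, abs_mul, abs_neg, abs_of_pos (mul_pos hA hB), abs_of_pos hE]
  calc A k * B L k * |Real.sin (B L k * y)| * Ex L D t k
      ≤ 1 / (Real.pi * L) * 1 * Ex L D t k := by gcongr
    _ = 1 / (Real.pi * L) * Ex L D t k := by ring

lemma norm_f2_le (hL : 0 < L) (k : ℕ) (y : ℝ) :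
    ‖f2 L D t k y‖ ≤ 1 / L ^ 2 * Ex L D t k := by
  have hπ := Real.pi_pos
  have hA := hA_pos k
  have hB := hB_pos hL k
  have hE : (0:ℝ) < Ex L D t k := hEx_pos k
  have hcos := abs_cos_le_one (B L k * y)
  rw [Real.norm_eq_abs]
  simp only [f2]
  rw [abs_mul, abs_mul, abs_neg, abs_of_pos (by positivity), abs_of_pos hE]
  calc A k * B L k ^ 2 * |Real.cos (B L k * y)| * Ex L D t k
      ≤ A k * B L k ^ 2 * 1 * Ex L D t k := by gcongr
    _ = 1 / L ^ 2 * Ex L D t k := by rw [hAB2 hL k]; ring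

lemma norm_g0_le (hL : 0 < L) (k : ℕ) (τ : ℝ) :
    ‖g0 L D x k τ‖ ≤ 1 / Real.pi ^ 2 * Ex L D τ k := by
  have h := norm_f0_le (D := D) (t := τ) hL k x
  simpa only [f0, g0] using h

lemma norm_g1_le (hL : 0 < L) (hD : 0 < D) (ht : 0 < t) (k : ℕ) {τ : ℝ}
    (hτ : τ ∈ Set.Ioi (t / 2)) :
    ‖g1 L D x k τ‖ ≤ D / L ^ 2 * Ex L D (t / 2) k := by
  have hπ := Real.pi_pos
  have hA := hA_pos k
  have hB := hB_pos hL k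
  have hE : (0:ℝ) < Ex L D τ k := hEx_pos k
  have hcos := abs_cos_le_one (B L k * x)
  have hmono : Ex L D τ k ≤ Ex L D (t/2) k := Ex_mono hD hL k (le_of_lt hτ)
  rw [Real.norm_eq_abs]
  simp only [g1]
  rw [abs_mul, abs_neg, abs_mul, abs_of_pos (by positivity), abs_of_pos hE]
  calc A k * (B L k ^ 2 * D) * |Real.cos (B L k * x)| * Ex L D τ k
      ≤ A k * (B L k ^ 2 * D) * 1 * Ex L D (t/2) k := by gcongr
    _ = A k * B L k ^ 2 * D * Ex L D (t/2) k := by ring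
    _ = D / L ^ 2 * Ex L D (t/2) k := by rw [hAB2 hL k]; ring

end Stmt3Aux

open Stmt3Aux

/-- For every `x ∈ (0,L)` and `t > 0`, the analytical electrolyte concentration
is differentiable in time and twice differentiable in space at `(x,t)` and
satisfies the diffusion equation `∂c_e/∂t = D ∂²c_e/∂x²`. -/
theorem stmt_3 (L D β cI : ℝ) (hL : 0 < L) (hD : 0 < D)
    (ce : ℝ × ℝ → ℝ)
    (hce : ∀ x t : ℝ, ce (x, t) =
      cI + β * (L / 2 - x) -
        4 * β * L *
          ∑' k : ℕ, (1 / ((2 * (k : ℝ) + 1) ^ 2 * Real.pi ^ 2)) *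
            Real.cos ((2 * (k : ℝ) + 1) * Real.pi * x / L) *
            Real.exp (-(((2 * (k : ℝ) + 1) * Real.pi / L) ^ 2 * D * t))) :
    ∀ x : ℝ, 0 < x → x < L → ∀ t : ℝ, 0 < t →
      DifferentiableAt ℝ (fun τ : ℝ => ce (x, τ)) t ∧
      DifferentiableAt ℝ (fun y : ℝ => ce (y, t)) x ∧
      DifferentiableAt ℝ (fun y : ℝ => deriv (fun z : ℝ => ce (z, t)) y) x ∧
      deriv (fun τ : ℝ => ce (x, τ)) t =
        D * deriv (fun y : ℝ => deriv (fun z : ℝ => ce (z, t)) y) x := by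
  intro x hx0 hxL t ht
  -- series rewriting
  have hceS : (fun z : ℝ => ce (z, t)) =
      fun z => cI + β * (L / 2 - z) - 4 * β * L * ∑' k : ℕ, f0 L D t k z := by
    funext z; rw [hce]
    congr 2
    apply tsum_congr; intro k
    simp only [f0, A, B, Ex]
    rw [show (2 * (k:ℝ) + 1) * Real.pi * z / L = (2 * (k:ℝ) + 1) * Real.pi / L * z from by ring]
  have hceT : (fun τ : ℝ => ce (x, τ)) =
      fun τ => cI + β * (L / 2 - x) - 4 * β * L * ∑' k : ℕ, g0 L D x k τ := by
    funext τ; rw [hce]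
    congr 2
    apply tsum_congr; intro k
    simp only [g0, A, B, Ex]
    rw [show (2 * (k:ℝ) + 1) * Real.pi * x / L = (2 * (k:ℝ) + 1) * Real.pi / L * x from by ring]
  -- derivative of the series in space
  have hS0 : ∀ y : ℝ, HasDerivAt (fun z => ∑' k : ℕ, f0 L D t k z)
      (∑' k : ℕ, f1 L D t k y) y := by
    intro y
    refine hasDerivAt_tsum_on isOpen_univ
      ((sumEx hL hD ht).mul_left (1 / (Real.pi * L)))
      (fun n z _ => hf0_deriv n z) (fun n z _ => norm_f1_le hL n z)
      (fun z _ => ?_) (Set.mem_univ y)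
    exact Summable.of_norm_bounded ((sumEx hL hD ht).mul_left (1 / Real.pi ^ 2))
      (fun n => norm_f0_le hL n z)
  have hS1 : ∀ y : ℝ, HasDerivAt (fun z => ∑' k : ℕ, f1 L D t k z)
      (∑' k : ℕ, f2 L D t k y) y := by
    intro y
    refine hasDerivAt_tsum_on isOpen_univ
      ((sumEx hL hD ht).mul_left (1 / L ^ 2))
      (fun n z _ => hf1_deriv n z) (fun n z _ => norm_f2_le hL n z)
      (fun z _ => ?_) (Set.mem_univ y)
    exact Summable.of_norm_bounded ((sumEx hL hD ht).mul_left (1 / (Real.pi * L)))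
      (fun n => norm_f1_le hL n z)
  -- derivative of the series in time
  have hT : HasDerivAt (fun τ => ∑' k : ℕ, g0 L D x k τ)
      (∑' k : ℕ, g1 L D x k t) t := by
    refine hasDerivAt_tsum_on isOpen_Ioi
      ((sumEx hL hD (by linarith : (0:ℝ) < t / 2)).mul_left (D / L ^ 2))
      (fun n τ _ => hg0_deriv n τ) (fun n τ hτ => norm_g1_le hL hD ht n hτ)
      (fun τ hτ => ?_) (by simp [Set.mem_Ioi]; linarith : t ∈ Set.Ioi (t / 2))
    have hτ0 : 0 < τ := lt_trans (by linarith) hτ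
    exact Summable.of_norm_bounded ((sumEx hL hD hτ0).mul_left (1 / Real.pi ^ 2))
      (fun n => norm_g0_le hL n τ)
  -- full derivatives
  have hDspace : ∀ y : ℝ, HasDerivAt (fun z => ce (z, t))
      (-β - 4 * β * L * ∑' k : ℕ, f1 L D t k y) y := by
    intro y
    rw [hceS]
    have h1 : HasDerivAt (fun z : ℝ => cI + β * (L / 2 - z)) (-β) y := by
      have := (((hasDerivAt_id y).const_sub (L / 2)).const_mul β).const_add cI
      refine this.congr_deriv ?_; ring
    exact h1.sub ((hS0 y).const_mul (4 * β * L))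
  have hderiv_eq : (fun y : ℝ => deriv (fun z : ℝ => ce (z, t)) y) =
      fun y => -β - 4 * β * L * ∑' k : ℕ, f1 L D t k y :=
    funext fun y => (hDspace y).deriv
  have hDspace2 : HasDerivAt (fun y : ℝ => deriv (fun z : ℝ => ce (z, t)) y)
      (-(4 * β * L * ∑' k : ℕ, f2 L D t k x)) x := by
    rw [hderiv_eq]
    exact HasDerivAt.const_sub (-β) ((hS1 x).const_mul (4 * β * L))
  have hDtime : HasDerivAt (fun τ : ℝ => ce (x, τ))
      (-(4 * β * L * ∑' k : ℕ, g1 L D x k t)) t := by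
    rw [hceT]
    exact HasDerivAt.const_sub (cI + β * (L / 2 - x)) (hT.const_mul (4 * β * L))
  refine ⟨hDtime.differentiableAt, (hDspace x).differentiableAt,
    hDspace2.differentiableAt, ?_⟩
  rw [hDtime.deriv, hDspace2.deriv]
  have hterm : ∀ k : ℕ, g1 L D x k t = D * f2 L D t k x := by
    intro k; simp only [g1, f2, Ex]; ring
  rw [tsum_congr hterm, tsum_mul_left]; ring
end

section
/- For every t > 0, the spatial derivative of c_e exists at x = 0 and at x = L and satisfies the constant-flux Neumann boundary conditions ∂c_e/∂x (0,t) = −β and ∂c_e/∂x (L,t) = −β. -/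
/-!
Each cosine mode `cos (ω x)` has derivative `-ω sin (ω x)`, which vanishes at `x = 0` and, for
the odd wave numbers `ω = (2k+1)π/L`, at `x = L`. For `t > 0` the heat factor `exp (-ω² D t)`
absorbs the extra factor `ω` (as `|ω| exp (-ω² c) ≤ 1 + c⁻¹`), so the differentiated series is
dominated by `∑ 1/(2k+1)²` and may be differentiated term by term. Only the linear part
`β (L/2 - x)` then contributes, with slope `-β`.
-/

open Real

theorem abs_mul_exp_neg_sq_mul_le {c : ℝ} (hc : 0 < c) (w : ℝ) :
    |w| * exp (-(w ^ 2 * c)) ≤ 1 + c⁻¹ := by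
  rw [exp_neg, ← div_eq_mul_inv, div_le_iff₀ (exp_pos _)]
  calc |w| ≤ 1 + w ^ 2 := by nlinarith [sq_abs w, sq_nonneg (|w| - 1)]
    _ ≤ (1 + c⁻¹) * (w ^ 2 * c + 1) := by
        have : c⁻¹ * (w ^ 2 * c + 1) = w ^ 2 + c⁻¹ := by field_simp
        rw [add_mul, one_mul, this]
        nlinarith [sq_nonneg w, inv_pos.mpr hc]
    _ ≤ (1 + c⁻¹) * exp (w ^ 2 * c) := by gcongr; exact add_one_le_exp _

theorem summable_one_div_odd_sq : Summable fun k : ℕ => 1 / (2 * (k : ℝ) + 1) ^ 2 := by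
  have hodd : Function.Injective fun k : ℕ => 2 * k + 1 := fun i j h => by simpa using h
  simpa [Function.comp_def] using (summable_one_div_nat_pow.mpr one_lt_two).comp_injective hodd

section HeatDamping

variable {b ω : ℕ → ℝ} {c : ℝ}

theorem summable_mul_exp_neg_sq_mul (hb : Summable b) (hc : 0 ≤ c) :
    Summable fun k => b k * exp (-(ω k ^ 2 * c)) := by
  refine hb.abs.of_norm_bounded fun k => ?_
  rw [norm_mul, norm_of_nonneg (exp_pos _).le]
  exact mul_le_of_le_one_right (abs_nonneg _) (exp_le_one_iff.mpr (neg_nonpos.mpr (by positivity)))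

theorem summable_abs_mul_exp_neg_sq_mul_mul (hb : Summable b) (hc : 0 < c) :
    Summable fun k => |b k * exp (-(ω k ^ 2 * c)) * ω k| := by
  refine (hb.abs.mul_right (1 + c⁻¹)).of_nonneg_of_le (fun _ => abs_nonneg _) fun k => ?_
  rw [abs_mul, abs_mul, abs_of_pos (exp_pos _), mul_assoc, mul_comm (exp _)]
  exact mul_le_mul_of_nonneg_left (abs_mul_exp_neg_sq_mul_le hc _) (abs_nonneg _)

end HeatDamping

section CosineSeries

variable {a ω : ℕ → ℝ}

theorem hasDerivAt_tsum_mul_cos (ha : Summable a) (haω : Summable fun k => |a k * ω k|)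
    (x : ℝ) :
    HasDerivAt (fun y => ∑' k, a k * cos (ω k * y))
      (∑' k, a k * (-sin (ω k * x) * ω k)) x := by
  have hterm : ∀ k y, HasDerivAt (fun y => a k * cos (ω k * y))
      (a k * (-sin (ω k * y) * ω k)) y := fun k y => by
    simpa using (((hasDerivAt_id y).const_mul (ω k)).cos).const_mul (a k)
  have hbound : ∀ k y, ‖a k * (-sin (ω k * y) * ω k)‖ ≤ |a k * ω k| := fun k y => by
    rw [norm_eq_abs, mul_comm (-sin _), ← mul_assoc, abs_mul, abs_neg]
    exact mul_le_of_le_one_right (abs_nonneg _) (abs_sin_le_one _)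
  exact hasDerivAt_tsum haω hterm hbound (y₀ := 0) (by simpa using ha) x

theorem hasDerivAt_tsum_mul_cos_of_sin_eq_zero (ha : Summable a)
    (haω : Summable fun k => |a k * ω k|) {x : ℝ} (hsin : ∀ k, sin (ω k * x) = 0) :
    HasDerivAt (fun y => ∑' k, a k * cos (ω k * y)) 0 x := by
  simpa [hsin] using hasDerivAt_tsum_mul_cos ha haω x

end CosineSeries

/-- For every `t > 0`, the spatial derivative of the analytical electrolyte
concentration exists at `x = 0` and `x = L` and satisfies the constant-flux
Neumann boundary conditions `∂c_e/∂x(0,t) = −β` and `∂c_e/∂x(L,t) = −β`. -/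
theorem stmt_4 (L D β cI : ℝ) (hL : 0 < L) (hD : 0 < D)
    (ce : ℝ × ℝ → ℝ)
    (hce : ∀ x t : ℝ, ce (x, t) =
      cI + β * (L / 2 - x) -
        4 * β * L *
          ∑' k : ℕ, (1 / ((2 * (k : ℝ) + 1) ^ 2 * Real.pi ^ 2)) *
            Real.cos ((2 * (k : ℝ) + 1) * Real.pi * x / L) *
            Real.exp (-(((2 * (k : ℝ) + 1) * Real.pi / L) ^ 2 * D * t))) :
    ∀ t : ℝ, 0 < t →
      HasDerivAt (fun y : ℝ => ce (y, t)) (-β) 0 ∧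
      HasDerivAt (fun y : ℝ => ce (y, t)) (-β) L := by
  intro t ht
  set ω : ℕ → ℝ := fun k => (2 * k + 1) * π / L
  set a : ℕ → ℝ := fun k =>
    1 / ((2 * (k : ℝ) + 1) ^ 2 * π ^ 2) * exp (-(ω k ^ 2 * (D * t)))
  have hce_t : (fun y => ce (y, t)) =
      fun y => cI + β * (L / 2 - y) - 4 * β * L * ∑' k, a k * cos (ω k * y) := by
    funext y
    rw [hce]
    congr 3; funext k
    simp only [a, ω]
    ring_nf
  have hb : Summable fun k : ℕ => 1 / ((2 * (k : ℝ) + 1) ^ 2 * π ^ 2) := by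
    simpa only [div_div] using summable_one_div_odd_sq.div_const (π ^ 2)
  have hslope : ∀ x, (∀ k, sin (ω k * x) = 0) → HasDerivAt (fun y => ce (y, t)) (-β) x := by
    intro x hsin
    have hseries := hasDerivAt_tsum_mul_cos_of_sin_eq_zero
      (summable_mul_exp_neg_sq_mul hb (mul_pos hD ht).le)
      (summable_abs_mul_exp_neg_sq_mul_mul hb (mul_pos hD ht)) hsin
    rw [hce_t]
    have hlin : HasDerivAt (fun y => cI + β * (L / 2 - y)) (-β) x := by
      simpa using (((hasDerivAt_id x).const_sub (L / 2)).const_mul β).const_add cI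
    exact (hlin.sub (hseries.const_mul (4 * β * L))).congr_deriv (by ring)
  refine ⟨hslope 0 fun k => by simp, hslope L fun k => ?_⟩
  rw [div_mul_cancel₀ _ hL.ne']
  exact_mod_cast sin_nat_mul_pi (2 * k + 1)
end

section
/- For every x ∈ [0,L] and every t ≥ 0, |c_e(x,t) − (c_I + β(L/2 − x))| ≤ (|β| L / 2) · exp(−(π/L)² D t); in particular, for each x ∈ [0,L], c_e(x,t) converges to the steady linear profile c_I + β(L/2 − x) as t → ∞. -/
/-!
Each Fourier mode decays at least as fast as the slowest one, `exp (-(π / L) ^ 2 * D * t)`,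
and `|cos| ≤ 1`, so the series is dominated by `exp (-(π / L) ^ 2 * D * t) / π ^ 2` times
`∑ 1 / (2k+1)^2 = π ^ 2 / 8` (the odd part of `ζ(2) = π ^ 2 / 6`); with the prefactor `4 |β| L`
this gives the constant `|β| L / 2`.
-/

open Real Filter

theorem hasSum_one_div_odd_sq :
    HasSum (fun k : ℕ => 1 / (2 * (k : ℝ) + 1) ^ 2) (π ^ 2 / 8) := by
  set f : ℕ → ℝ := fun n => 1 / (n : ℝ) ^ 2
  have hf : HasSum f (π ^ 2 / 6) := hasSum_zeta_two
  have heven : HasSum (fun k => f (2 * k)) (π ^ 2 / 24) := by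
    have h := hf.mul_left (1 / 4)
    rw [show 1 / 4 * (π ^ 2 / 6) = π ^ 2 / 24 by ring] at h
    refine h.congr_fun fun k => ?_
    simp only [f]
    push_cast
    ring
  have hodd : HasSum (fun k => f (2 * k + 1)) (∑' k, f (2 * k + 1)) :=
    (hf.summable.comp_injective fun _ _ h => by simpa using h).hasSum
  have hsum : π ^ 2 / 24 + ∑' k, f (2 * k + 1) = π ^ 2 / 6 :=
    (heven.even_add_odd hodd).unique hf
  convert hodd using 1
  · ext k
    simp [f]
  · linarith

theorem exp_neg_mul_sq_le_of_one_le {m : ℝ} (hm : 1 ≤ m) (c : ℝ) {s : ℝ} (hs : 0 ≤ s) :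
    exp (-((m * c) ^ 2 * s)) ≤ exp (-(c ^ 2 * s)) := by
  refine exp_le_exp.mpr (neg_le_neg (mul_le_mul_of_nonneg_right ?_ hs))
  rw [mul_pow]
  exact le_mul_of_one_le_left (sq_nonneg c) (one_le_pow₀ hm)

theorem tendsto_exp_neg_mul_atTop {a : ℝ} (ha : 0 < a) :
    Tendsto (fun t => exp (-a * t)) atTop (nhds 0) :=
  (tendsto_exp_neg_atTop_nhds_zero.comp (tendsto_id.const_mul_atTop ha)).congr fun t => by
    simp [neg_mul]

noncomputable def oddCosineModes (L D x t : ℝ) : ℝ :=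
  ∑' k : ℕ, (1 / ((2 * (k : ℝ) + 1) ^ 2 * π ^ 2)) * cos ((2 * (k : ℝ) + 1) * π * x / L) *
    exp (-(((2 * (k : ℝ) + 1) * π / L) ^ 2 * D * t))

theorem abs_oddCosineModes_le (L x : ℝ) {D t : ℝ} (hD : 0 ≤ D) (ht : 0 ≤ t) :
    |oddCosineModes L D x t| ≤ exp (-(π / L) ^ 2 * D * t) / 8 := by
  set E := exp (-(π / L) ^ 2 * D * t)
  have hmajorant : HasSum (fun k : ℕ => 1 / ((2 * (k : ℝ) + 1) ^ 2 * π ^ 2) * E) (E / 8) := by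
    have h := hasSum_one_div_odd_sq.mul_right (E / π ^ 2)
    rw [show π ^ 2 / 8 * (E / π ^ 2) = E / 8 by field_simp] at h
    refine h.congr_fun fun k => ?_
    field_simp
  rw [← Real.norm_eq_abs, oddCosineModes]
  refine tsum_of_norm_bounded hmajorant fun k => ?_
  have hcoeff : 0 < 1 / ((2 * (k : ℝ) + 1) ^ 2 * π ^ 2) := by positivity
  have hdecay : exp (-(((2 * (k : ℝ) + 1) * π / L) ^ 2 * D * t)) ≤ E := by
    have h := exp_neg_mul_sq_le_of_one_le (m := 2 * (k : ℝ) + 1) (by simp) (π / L)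
      (mul_nonneg hD ht)
    simpa only [E, mul_div_assoc, mul_assoc, neg_mul] using h
  rw [Real.norm_eq_abs, abs_mul, abs_mul, abs_of_pos hcoeff, abs_of_pos (exp_pos _)]
  exact mul_le_mul (mul_le_of_le_one_right hcoeff.le (abs_cos_le_one _)) hdecay
    (exp_pos _).le hcoeff.le

/-- For every `x ∈ [0,L]` and `t ≥ 0`,
`|c_e(x,t) − (c_I + β(L/2 − x))| ≤ (|β| L / 2) · exp(−(π/L)² D t)`;
in particular, `c_e(x,t)` converges to the steady linear profile
`c_I + β(L/2 − x)` as `t → ∞`. -/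
theorem stmt_6 (L D β cI : ℝ) (hL : 0 < L) (hD : 0 < D)
    (ce : ℝ × ℝ → ℝ)
    (hce : ∀ x t : ℝ, ce (x, t) =
      cI + β * (L / 2 - x) -
        4 * β * L *
          ∑' k : ℕ, (1 / ((2 * (k : ℝ) + 1) ^ 2 * Real.pi ^ 2)) *
            Real.cos ((2 * (k : ℝ) + 1) * Real.pi * x / L) *
            Real.exp (-(((2 * (k : ℝ) + 1) * Real.pi / L) ^ 2 * D * t))) :
    (∀ x : ℝ, 0 ≤ x → x ≤ L → ∀ t : ℝ, 0 ≤ t →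
      |ce (x, t) - (cI + β * (L / 2 - x))| ≤
        |β| * L / 2 * Real.exp (-(Real.pi / L) ^ 2 * D * t)) ∧
    (∀ x : ℝ, 0 ≤ x → x ≤ L →
      Tendsto (fun t : ℝ => ce (x, t)) atTop (nhds (cI + β * (L / 2 - x)))) := by
  have hbound : ∀ x t : ℝ, 0 ≤ t →
      |ce (x, t) - (cI + β * (L / 2 - x))| ≤ |β| * L / 2 * exp (-(π / L) ^ 2 * D * t) := by
    intro x t ht
    calc |ce (x, t) - (cI + β * (L / 2 - x))| = 4 * |β| * L * |oddCosineModes L D x t| := by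
          rw [hce, ← oddCosineModes, sub_sub_cancel_left, abs_neg]
          simp only [abs_mul, abs_of_pos hL, abs_of_pos (four_pos : (0 : ℝ) < 4)]
      _ ≤ 4 * |β| * L * (exp (-(π / L) ^ 2 * D * t) / 8) := by
          gcongr
          exact abs_oddCosineModes_le L x hD.le ht
      _ = |β| * L / 2 * exp (-(π / L) ^ 2 * D * t) := by ring
  refine ⟨fun x _ _ t ht => hbound x t ht, fun x _ _ => ?_⟩
  have hdecay : Tendsto (fun t => |β| * L / 2 * exp (-(π / L) ^ 2 * D * t)) atTop (nhds 0) := by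
    simpa [mul_assoc] using
      (tendsto_exp_neg_mul_atTop (by positivity : 0 < (π / L) ^ 2 * D)).const_mul (|β| * L / 2)
  refine tendsto_sub_nhds_zero_iff.mp (squeeze_zero_norm' ?_ hdecay)
  filter_upwards [eventually_ge_atTop 0] with t ht
  exact hbound x t ht
end

section
/- For every x ∈ (0,L) and every t > 0, the function c̄ is differentiable in time and twice differentiable in space at (x,t), and it satisfies the diffusion equation ∂c̄/∂t (x,t) = D ∂²c̄/∂x² (x,t). -/
/-! Each mode `cos (k x) * exp (-k² D t)` solves `u_t = D u_xx`, and so does the heat polynomial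
`x² + 2 D t`; `c̄` is a heat polynomial plus a multiple of a cosine series in such modes. For
`t ≥ t₀ > 0` the Gaussian factors `exp (-k² D t₀)` dominate the powers of `k` produced by
differentiating, so the series may be differentiated termwise once in `t` and twice in `x`. -/

open Real

section HeatModes

variable (a k D : ℝ)

theorem hasDerivAt_cos_heatMode_time (x t : ℝ) :
    HasDerivAt (fun τ => a * cos (k * x) * exp (-(k ^ 2 * D * τ)))
      (-D * (a * k ^ 2 * cos (k * x) * exp (-(k ^ 2 * D * t)))) t := by
  have h := (((hasDerivAt_id' t).const_mul (k ^ 2 * D)).fun_neg.exp).const_mul (a * cos (k * x))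
  exact h.congr_deriv (by ring)

theorem hasDerivAt_cos_heatMode_space (x t : ℝ) :
    HasDerivAt (fun y => a * cos (k * y) * exp (-(k ^ 2 * D * t)))
      (-(a * k * sin (k * x) * exp (-(k ^ 2 * D * t)))) x := by
  have h := ((((hasDerivAt_id' x).const_mul k).cos).const_mul a).mul_const (exp (-(k ^ 2 * D * t)))
  exact h.congr_deriv (by ring)

theorem hasDerivAt_sin_heatMode_space (x t : ℝ) :
    HasDerivAt (fun y => a * k * sin (k * y) * exp (-(k ^ 2 * D * t)))
      (a * k ^ 2 * cos (k * x) * exp (-(k ^ 2 * D * t))) x := by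
  have h := ((((hasDerivAt_id' x).const_mul k).sin).const_mul (a * k)).mul_const
    (exp (-(k ^ 2 * D * t)))
  exact h.congr_deriv (by ring)

variable {a k D}

theorem norm_mul_mul_mul_exp_le {w c e : ℝ} (hw : |w| ≤ 1 + k ^ 2) (hc : |c| ≤ 1) :
    ‖a * w * c * exp e‖ ≤ |a| * (1 + k ^ 2) * exp e := by
  rw [Real.norm_eq_abs, abs_mul, abs_mul, abs_mul, abs_of_pos (exp_pos e)]
  have hwc : |w| * |c| ≤ 1 + k ^ 2 := by
    simpa using mul_le_mul hw hc (abs_nonneg c) (by positivity)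
  calc |a| * |w| * |c| * exp e = |a| * (|w| * |c|) * exp e := by ring
    _ ≤ |a| * (1 + k ^ 2) * exp e := by gcongr

theorem abs_le_one_add_sq (k : ℝ) : |k| ≤ 1 + k ^ 2 := by
  nlinarith [sq_abs k, sq_nonneg (|k| - 1)]

end HeatModes

theorem heat_equation_of_hasDerivAt {u : ℝ × ℝ → ℝ} {ux : ℝ → ℝ} {ut uxx D x t : ℝ}
    (h_t : HasDerivAt (fun τ => u (x, τ)) ut t)
    (h_x : ∀ y, HasDerivAt (fun z => u (z, t)) (ux y) y)
    (h_xx : HasDerivAt ux uxx x) (h : ut = D * uxx) :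
    DifferentiableAt ℝ (fun τ => u (x, τ)) t ∧ DifferentiableAt ℝ (fun y => u (y, t)) x ∧
      DifferentiableAt ℝ (fun y => deriv (fun z => u (z, t)) y) x ∧
      deriv (fun τ => u (x, τ)) t = D * deriv (fun y => deriv (fun z => u (z, t)) y) x := by
  have hux : (fun y => deriv (fun z => u (z, t)) y) = ux := funext fun y => (h_x y).deriv
  rw [hux, h_t.deriv, h_xx.deriv]
  exact ⟨h_t.differentiableAt, (h_x x).differentiableAt, h_xx.differentiableAt, h⟩

section HeatSeries

variable (a k : ℕ → ℝ) (D : ℝ)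

noncomputable def cosHeatSeries (x t : ℝ) : ℝ :=
  ∑' n, a n * cos (k n * x) * exp (-(k n ^ 2 * D * t))

noncomputable def sinHeatSeries (x t : ℝ) : ℝ :=
  ∑' n, a n * k n * sin (k n * x) * exp (-(k n ^ 2 * D * t))

-- `1 + k ^ 2` dominates the factors `1`, `|k|` and `k ^ 2` that up to two derivatives produce.
def HeatSeriesSummable : Prop :=
  ∀ t > 0, Summable fun n => |a n| * (1 + k n ^ 2) * exp (-(k n ^ 2 * D * t))

variable {a k D} (hsum : HeatSeriesSummable a k D)
include hsum

theorem summable_cos_heatModes {t : ℝ} (ht : 0 < t) (x : ℝ) :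
    Summable fun n => a n * cos (k n * x) * exp (-(k n ^ 2 * D * t)) :=
  (hsum t ht).of_norm_bounded fun n => by
    simpa using norm_mul_mul_mul_exp_le (a := a n) (w := 1) (c := cos (k n * x))
      (e := -(k n ^ 2 * D * t)) (by simpa using sq_nonneg (k n)) (abs_cos_le_one _)

theorem hasDerivAt_cosHeatSeries_time (hD : 0 ≤ D) (x : ℝ) {t : ℝ} (ht : 0 < t) :
    HasDerivAt (cosHeatSeries a k D x) (-D * cosHeatSeries (fun n => a n * k n ^ 2) k D x t) t := by
  have hmem : t ∈ Set.Ioi (t / 2) := by simp only [Set.mem_Ioi]; linarith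
  rw [cosHeatSeries, ← tsum_mul_left]
  refine hasDerivAt_tsum_of_isPreconnected ((hsum (t / 2) (by positivity)).mul_left D) isOpen_Ioi
    isPreconnected_Ioi (fun n τ _ => hasDerivAt_cos_heatMode_time _ _ _ _ _)
    (fun n τ hτ => ?_) hmem (summable_cos_heatModes hsum ht x) hmem
  rw [norm_mul, Real.norm_eq_abs, abs_neg, abs_of_nonneg hD]
  gcongr
  exact (norm_mul_mul_mul_exp_le (k := k n) (by simp) (abs_cos_le_one _)).trans
    (by gcongr; exact hτ.le)

theorem hasDerivAt_cosHeatSeries_space {t : ℝ} (ht : 0 < t) (x : ℝ) :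
    HasDerivAt (fun y => cosHeatSeries a k D y t) (-sinHeatSeries a k D x t) x := by
  rw [sinHeatSeries, ← tsum_neg]
  exact hasDerivAt_tsum (hsum t ht) (fun n y => hasDerivAt_cos_heatMode_space _ _ _ _ _)
    (fun n y => by
      rw [norm_neg]
      exact norm_mul_mul_mul_exp_le (abs_le_one_add_sq _) (abs_sin_le_one _))
    (summable_cos_heatModes hsum ht 0) x

theorem hasDerivAt_sinHeatSeries_space {t : ℝ} (ht : 0 < t) (x : ℝ) :
    HasDerivAt (fun y => sinHeatSeries a k D y t)
      (cosHeatSeries (fun n => a n * k n ^ 2) k D x t) x :=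
  hasDerivAt_tsum (hsum t ht) (fun n y => hasDerivAt_sin_heatMode_space _ _ _ _ _)
    (fun n y => norm_mul_mul_mul_exp_le (by simp) (abs_cos_le_one _))
    (y₀ := 0) (by simp) x

theorem heat_equation_of_eq_heatPolynomial_add_cosHeatSeries (hD : 0 ≤ D) {u : ℝ × ℝ → ℝ}
    {p q r γ : ℝ}
    (hu : ∀ y τ,
      u (y, τ) = p + q * y + r * (y ^ 2 + 2 * D * τ) + γ * cosHeatSeries a k D y τ)
    (x : ℝ) {t : ℝ} (ht : 0 < t) :
    DifferentiableAt ℝ (fun τ => u (x, τ)) t ∧ DifferentiableAt ℝ (fun y => u (y, t)) x ∧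
      DifferentiableAt ℝ (fun y => deriv (fun z => u (z, t)) y) x ∧
      deriv (fun τ => u (x, τ)) t = D * deriv (fun y => deriv (fun z => u (z, t)) y) x := by
  have hpoly_x : ∀ y, HasDerivAt (fun z => p + q * z + r * (z ^ 2 + 2 * D * t))
      (q + 2 * r * y) y := fun y =>
    ((((hasDerivAt_id' y).const_mul q).const_add p).add
      (((hasDerivAt_pow 2 y).add_const _).const_mul r)).congr_deriv (by ring)
  have hpoly_t : HasDerivAt (fun τ => p + q * x + r * (x ^ 2 + 2 * D * τ)) (r * (2 * D)) t :=
    ((((hasDerivAt_id' t).const_mul (2 * D)).const_add (x ^ 2)).const_mul r).const_add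
      (p + q * x) |>.congr_deriv (by ring)
  have h_t : HasDerivAt (fun τ => u (x, τ))
      (r * (2 * D) + γ * (-D * cosHeatSeries (fun n => a n * k n ^ 2) k D x t)) t := by
    simp only [hu]
    exact hpoly_t.add ((hasDerivAt_cosHeatSeries_time hsum hD x ht).const_mul γ)
  have h_x : ∀ y, HasDerivAt (fun z => u (z, t))
      (q + 2 * r * y + γ * -sinHeatSeries a k D y t) y := by
    intro y
    simp only [hu]
    exact (hpoly_x y).add ((hasDerivAt_cosHeatSeries_space hsum ht y).const_mul γ)
  have h_xx : HasDerivAt (fun y => q + 2 * r * y + γ * -sinHeatSeries a k D y t)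
      (2 * r + γ * -cosHeatSeries (fun n => a n * k n ^ 2) k D x t) x :=
    ((((hasDerivAt_id' x).const_mul (2 * r)).const_add q).add
      ((hasDerivAt_sinHeatSeries_space hsum ht x).neg.const_mul γ)).congr_deriv (by ring)
  exact heat_equation_of_hasDerivAt h_t h_x h_xx (by ring)

end HeatSeries

theorem heatSeriesSummable_inv_sq {L D : ℝ} (hL : L ≠ 0) (hD : 0 < D) :
    HeatSeriesSummable (fun n : ℕ => 1 / (((n : ℝ) + 1) ^ 2 * π ^ 2))
      (fun n : ℕ => ((n : ℝ) + 1) * π / L) D := by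
  intro t ht
  have hc : -((π / L) ^ 2 * D * t) < 0 := neg_neg_of_pos (by positivity)
  have hgauss := summable_exp_nat_mul_of_ge hc (f := fun n => ((n : ℝ) + 1) ^ 2)
    (fun n => by nlinarith [(n.cast_nonneg : (0 : ℝ) ≤ n)])
  refine (hgauss.mul_left (1 / π ^ 2 + 1 / L ^ 2)).of_nonneg_of_le (fun n => by positivity)
    (fun n => ?_)
  have hn : (1 : ℝ) ≤ ((n : ℝ) + 1) ^ 2 := by nlinarith [(n.cast_nonneg : (0 : ℝ) ≤ n)]
  have hweight : |1 / (((n : ℝ) + 1) ^ 2 * π ^ 2)| * (1 + (((n : ℝ) + 1) * π / L) ^ 2) =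
      1 / (((n : ℝ) + 1) ^ 2 * π ^ 2) + 1 / L ^ 2 := by
    rw [abs_of_pos (by positivity)]
    field_simp
  have hexp : -((((n : ℝ) + 1) * π / L) ^ 2 * D * t) =
      -((π / L) ^ 2 * D * t) * ((n : ℝ) + 1) ^ 2 := by
    ring
  simp only [hweight, hexp]
  gcongr
  exact le_mul_of_one_le_left (by positivity) hn

/-- For every `x ∈ (0,L)` and `t > 0`, the analytical solid-phase concentration
is differentiable in time and twice differentiable in space at `(x,t)` and
satisfies the diffusion equation `∂c̄/∂t = D ∂²c̄/∂x²`. -/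
theorem stmt_7 (L D β cI : ℝ) (hL : 0 < L) (hD : 0 < D)
    (cbar : ℝ × ℝ → ℝ)
    (hcbar : ∀ x t : ℝ, cbar (x, t) =
      cI - β * x * (1 - x / (2 * L)) + β * D * t / L +
        2 * β * L * (1 / 6 -
          ∑' n : ℕ, (1 / (((n : ℝ) + 1) ^ 2 * Real.pi ^ 2)) *
            Real.cos (((n : ℝ) + 1) * Real.pi * x / L) *
            Real.exp (-((((n : ℝ) + 1) * Real.pi / L) ^ 2 * D * t))) ) :
    ∀ x : ℝ, 0 < x → x < L → ∀ t : ℝ, 0 < t →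
      DifferentiableAt ℝ (fun τ : ℝ => cbar (x, τ)) t ∧
      DifferentiableAt ℝ (fun y : ℝ => cbar (y, t)) x ∧
      DifferentiableAt ℝ (fun y : ℝ => deriv (fun z : ℝ => cbar (z, t)) y) x ∧
      deriv (fun τ : ℝ => cbar (x, τ)) t =
        D * deriv (fun y : ℝ => deriv (fun z : ℝ => cbar (z, t)) y) x := by
  intro x _ _ t ht
  refine heat_equation_of_eq_heatPolynomial_add_cosHeatSeries
    (heatSeriesSummable_inv_sq hL.ne' hD) hD.le (p := cI + β * L / 3) (q := -β)
    (r := β / (2 * L)) (γ := -(2 * β * L)) (fun y τ => ?_) x ht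
  rw [hcbar]
  simp only [cosHeatSeries, div_mul_eq_mul_div]
  ring
end

section
/- For every x with 0 ≤ x ≤ L, c̄(x,0) = c_I; that is, the analytical solid-phase concentration satisfies the constant initial condition c̄(x,0) = c_I on [0,L]. -/
/-!
At `t = 0` every exponential equals `1`, and with `y = x / (2L) ∈ [0, 1]` the remaining cosine
series is `π⁻² ∑ n⁻² cos (2πny) = B₂(y) = y² - y + 1/6`, the Fourier expansion of the second
Bernoulli polynomial. Substituted back, it cancels the quadratic `βx(1 - x/(2L))` exactly.
-/

open Real

theorem hasSum_one_div_succ_sq_mul_cos {y : ℝ} (hy : y ∈ Set.Icc (0 : ℝ) 1) :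
    HasSum (fun n : ℕ => 1 / ((n : ℝ) + 1) ^ 2 * cos (2 * π * ((n : ℝ) + 1) * y))
      (π ^ 2 * (y ^ 2 - y + 1 / 6)) := by
  have h := (hasSum_nat_add_iff' 1).mpr (hasSum_one_div_nat_pow_mul_cos (k := 1) one_ne_zero hy)
  rw [Nat.mul_one, ← bernoulliFun, bernoulliFun_two] at h
  norm_num [Nat.factorial] at h
  simpa only [show (2 * π) ^ 2 / 2 / 2 = π ^ 2 by ring, one_div] using h

theorem tsum_one_div_succ_sq_mul_pi_sq_mul_cos {L x : ℝ} (hL : 0 < L) (hx₀ : 0 ≤ x)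
    (hx : x ≤ 2 * L) :
    ∑' n : ℕ, 1 / (((n : ℝ) + 1) ^ 2 * π ^ 2) * cos (((n : ℝ) + 1) * π * x / L) =
      (x / (2 * L)) ^ 2 - x / (2 * L) + 1 / 6 := by
  have hy : x / (2 * L) ∈ Set.Icc (0 : ℝ) 1 :=
    ⟨by positivity, (div_le_one (by positivity)).mpr hx⟩
  have hterm : ∀ n : ℕ, 1 / (((n : ℝ) + 1) ^ 2 * π ^ 2) * cos (((n : ℝ) + 1) * π * x / L) =
      π⁻¹ ^ 2 * (1 / ((n : ℝ) + 1) ^ 2 * cos (2 * π * ((n : ℝ) + 1) * (x / (2 * L)))) := by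
    intro n
    field_simp
  rw [tsum_congr hterm, tsum_mul_left, (hasSum_one_div_succ_sq_mul_cos hy).tsum_eq]
  field_simp

theorem stmt_9_general (L D β cI : ℝ) (hL : 0 < L)
    (cbar : ℝ × ℝ → ℝ)
    (hcbar : ∀ x t : ℝ, cbar (x, t) =
      cI - β * x * (1 - x / (2 * L)) + β * D * t / L +
        2 * β * L * (1 / 6 -
          ∑' n : ℕ, (1 / (((n : ℝ) + 1) ^ 2 * Real.pi ^ 2)) *
            Real.cos (((n : ℝ) + 1) * Real.pi * x / L) *
            Real.exp (-((((n : ℝ) + 1) * Real.pi / L) ^ 2 * D * t))) ) :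
    ∀ x : ℝ, 0 ≤ x → x ≤ L → cbar (x, 0) = cI := by
  intro x hx₀ hxL
  simp only [hcbar, mul_zero, neg_zero, exp_zero, mul_one, zero_div, add_zero]
  rw [tsum_one_div_succ_sq_mul_pi_sq_mul_cos hL hx₀ (by linarith)]
  field_simp
  ring

/-- The analytical solid-phase concentration of the 1D LIB half-cell in
galvanostatic mode satisfies the constant initial condition `c̄(x,0) = c_I`
on `[0,L]`. -/
theorem stmt_9 (L D β cI : ℝ) (hL : 0 < L) (hD : 0 < D)
    (cbar : ℝ × ℝ → ℝ)
    (hcbar : ∀ x t : ℝ, cbar (x, t) =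
      cI - β * x * (1 - x / (2 * L)) + β * D * t / L +
        2 * β * L * (1 / 6 -
          ∑' n : ℕ, (1 / (((n : ℝ) + 1) ^ 2 * Real.pi ^ 2)) *
            Real.cos (((n : ℝ) + 1) * Real.pi * x / L) *
            Real.exp (-((((n : ℝ) + 1) * Real.pi / L) ^ 2 * D * t))) ) :
    ∀ x : ℝ, 0 ≤ x → x ≤ L → cbar (x, 0) = cI :=
  stmt_9_general L D β cI hL cbar hcbar
end

section
/- For every t ≥ 0, the total lithium content of the active material grows linearly in time: ∫_0^L c̄(x,t) dx = L · c_I + β D t. -/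
open Real MeasureTheory

/-- For every `t ≥ 0`, the total lithium content of the active material grows
linearly in time: `∫_0^L c̄(x,t) dx = L · c_I + β D t`. -/
theorem stmt_10 (L D β cI : ℝ) (hL : 0 < L) (hD : 0 < D)
    (cbar : ℝ × ℝ → ℝ)
    (hcbar : ∀ x t : ℝ, cbar (x, t) =
      cI - β * x * (1 - x / (2 * L)) + β * D * t / L +
        2 * β * L * (1 / 6 -
          ∑' n : ℕ, (1 / (((n : ℝ) + 1) ^ 2 * Real.pi ^ 2)) *
            Real.cos (((n : ℝ) + 1) * Real.pi * x / L) *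
            Real.exp (-((((n : ℝ) + 1) * Real.pi / L) ^ 2 * D * t))) ) :
    ∀ t : ℝ, 0 ≤ t → ∫ x in (0 : ℝ)..L, cbar (x, t) = L * cI + β * D * t := by
  intro t ht
  -- the summand functions and the uniform bound
  set F : ℕ → ℝ → ℝ := fun n x =>
    (1 / (((n : ℝ) + 1) ^ 2 * Real.pi ^ 2)) *
      Real.cos (((n : ℝ) + 1) * Real.pi * x / L) *
      Real.exp (-((((n : ℝ) + 1) * Real.pi / L) ^ 2 * D * t)) with hF
  set u : ℕ → ℝ := fun n => 1 / (((n : ℝ) + 1) ^ 2 * Real.pi ^ 2) with hu_def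
  have hFc : ∀ n, Continuous (F n) := by
    intro n
    apply Continuous.mul
    · exact continuous_const.mul (Real.continuous_cos.comp (by fun_prop))
    · exact continuous_const
  have h2 : Summable (fun n : ℕ => 1 / ((n : ℝ) + 1) ^ 2) := by
    have := (summable_nat_add_iff (f := fun n : ℕ => 1 / (n : ℝ) ^ 2) 1).mpr
      (summable_one_div_nat_pow.mpr one_lt_two)
    simpa [Nat.cast_add] using this
  have hu : Summable u := by
    refine (h2.mul_right ((Real.pi ^ 2)⁻¹)).congr fun n => ?_
    simp [hu_def, one_div, mul_inv, mul_comm]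
  have hb : ∀ n x, ‖F n x‖ ≤ u n := by
    intro n x
    have hun : 0 ≤ u n := by positivity
    have hexp : Real.exp (-((((n : ℝ) + 1) * Real.pi / L) ^ 2 * D * t)) ≤ 1 := by
      rw [Real.exp_le_one_iff]
      have : 0 ≤ (((n : ℝ) + 1) * Real.pi / L) ^ 2 * D * t := by positivity
      linarith
    have hcos : |Real.cos (((n : ℝ) + 1) * Real.pi * x / L)| ≤ 1 := Real.abs_cos_le_one _
    rw [hF]
    simp only [norm_mul, Real.norm_eq_abs]
    rw [abs_of_nonneg (by positivity : (0:ℝ) ≤ 1 / (((n : ℝ) + 1) ^ 2 * Real.pi ^ 2)),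
      abs_of_nonneg (Real.exp_pos _).le]
    calc 1 / (((n : ℝ) + 1) ^ 2 * Real.pi ^ 2) * |Real.cos (((n : ℝ) + 1) * Real.pi * x / L)| *
          Real.exp (-((((n : ℝ) + 1) * Real.pi / L) ^ 2 * D * t))
        ≤ 1 / (((n : ℝ) + 1) ^ 2 * Real.pi ^ 2) * 1 * 1 := by
          apply mul_le_mul (mul_le_mul le_rfl hcos (abs_nonneg _) (by positivity)) hexp
            (Real.exp_pos _).le (by positivity)
      _ = u n := by simp [hu_def]
  set g : ℝ → ℝ := fun x => ∑' n : ℕ, F n x with hg_def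
  have hgc : Continuous g := continuous_tsum hFc hu (fun n x => hb n x)
  -- each interval integral vanishes
  have hI : ∀ n, ∫ x in (0:ℝ)..L, F n x = 0 := by
    intro n
    set a : ℝ := ((n : ℝ) + 1) * Real.pi / L with ha_def
    have ha : a ≠ 0 := by positivity
    have harg : ∀ x : ℝ, ((n : ℝ) + 1) * Real.pi * x / L = a * x := by
      intro x; rw [ha_def]; ring
    have hsin : Real.sin (a * L) = 0 := by
      have haL : a * L = ((n : ℝ) + 1) * Real.pi := by
        rw [ha_def]; field_simp
      have := Real.sin_nat_mul_pi (n + 1)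
      push_cast at this
      rw [haL]; exact this
    have hcosint : ∫ x in (0:ℝ)..L, Real.cos (a * x) = 0 := by
      have := intervalIntegral.mul_integral_comp_mul_left (a := (0:ℝ)) (b := L)
        (f := Real.cos) (c := a)
      rw [integral_cos] at this
      simp only [mul_zero, Real.sin_zero, sub_zero] at this
      rw [hsin] at this
      exact (mul_eq_zero.mp this).resolve_left ha
    calc ∫ x in (0:ℝ)..L, F n x
        = ∫ x in (0:ℝ)..L, (1 / (((n : ℝ) + 1) ^ 2 * Real.pi ^ 2) *
            Real.exp (-((((n : ℝ) + 1) * Real.pi / L) ^ 2 * D * t))) * Real.cos (a * x) := by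
          apply intervalIntegral.integral_congr
          intro x _
          rw [hF]
          simp only
          rw [harg x]; ring
      _ = (1 / (((n : ℝ) + 1) ^ 2 * Real.pi ^ 2) *
            Real.exp (-((((n : ℝ) + 1) * Real.pi / L) ^ 2 * D * t))) *
            ∫ x in (0:ℝ)..L, Real.cos (a * x) := intervalIntegral.integral_const_mul _ _
      _ = 0 := by rw [hcosint, mul_zero]
  -- the integral of the series vanishes
  have hint : ∀ n, Integrable (F n) (volume.restrict (Set.Ioc 0 L)) := fun n =>
    (hFc n).integrableOn_Ioc
  have hle : ∀ n, ∫ x in Set.Ioc (0:ℝ) L, ‖F n x‖ ≤ L * u n := by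
    intro n
    have : ∫ x in Set.Ioc (0:ℝ) L, ‖F n x‖ ≤ ∫ _x in Set.Ioc (0:ℝ) L, u n :=
      integral_mono (hint n).norm (integrable_const _) (fun x => hb n x)
    calc ∫ x in Set.Ioc (0:ℝ) L, ‖F n x‖ ≤ ∫ _x in Set.Ioc (0:ℝ) L, u n := this
      _ = L * u n := by
          simp [Real.volume_Ioc, ENNReal.toReal_ofReal hL.le, hL.le]
  have hsum : Summable fun n => ∫ x in Set.Ioc (0:ℝ) L, ‖F n x‖ :=
    Summable.of_nonneg_of_le (fun n => integral_nonneg fun x => norm_nonneg _) hle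
      (hu.mul_left L)
  have hg0 : ∫ x in (0:ℝ)..L, g x = 0 := by
    rw [intervalIntegral.integral_of_le hL.le]
    have := MeasureTheory.integral_tsum_of_summable_integral_norm hint hsum
    rw [hg_def]
    simp only
    rw [← this]
    have : ∀ n, ∫ x in Set.Ioc (0:ℝ) L, F n x = 0 := by
      intro n
      rw [← intervalIntegral.integral_of_le hL.le]
      exact hI n
    simp [this]
  -- algebraic rewriting of the integrand
  have halg : ∀ x G : ℝ,
      cI - β * x * (1 - x / (2 * L)) + β * D * t / L + 2 * β * L * (1 / 6 - G) =
      ((cI + β * D * t / L + β * L / 3) + (-β) * x + (β / (2 * L)) * x ^ 2) +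
        (-(2 * β * L)) * G := by
    intro x G
    field_simp
    ring
  have hrw : ∀ x : ℝ, cbar (x, t) =
      ((cI + β * D * t / L + β * L / 3) + (-β) * x + (β / (2 * L)) * x ^ 2) +
        (-(2 * β * L)) * g x := by
    intro x
    rw [hcbar x t, halg x (g x)]
  have i1 : IntervalIntegrable
      (fun x => (cI + β * D * t / L + β * L / 3) + (-β) * x + (β / (2 * L)) * x ^ 2)
      volume 0 L := (by fun_prop : Continuous fun x : ℝ =>
        (cI + β * D * t / L + β * L / 3) + (-β) * x + (β / (2 * L)) * x ^ 2).intervalIntegrable 0 L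
  have i2 : IntervalIntegrable (fun x => (-(2 * β * L)) * g x) volume 0 L :=
    (continuous_const.mul hgc).intervalIntegrable 0 L
  rw [intervalIntegral.integral_congr (fun x _ => hrw x),
    intervalIntegral.integral_add i1 i2, intervalIntegral.integral_const_mul, hg0, mul_zero,
    add_zero]
  have ia : IntervalIntegrable (fun _ : ℝ => cI + β * D * t / L + β * L / 3) volume 0 L :=
    intervalIntegrable_const
  have ib : IntervalIntegrable (fun x : ℝ => (-β) * x) volume 0 L :=
    (by fun_prop : Continuous fun x : ℝ => (-β) * x).intervalIntegrable 0 L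
  have ic : IntervalIntegrable (fun x : ℝ => (β / (2 * L)) * x ^ 2) volume 0 L :=
    (by fun_prop : Continuous fun x : ℝ => (β / (2 * L)) * x ^ 2).intervalIntegrable 0 L
  rw [intervalIntegral.integral_add (ia.add ib) ic, intervalIntegral.integral_add ia ib,
    intervalIntegral.integral_const, intervalIntegral.integral_const_mul,
    intervalIntegral.integral_const_mul, integral_id, integral_pow]
  simp only [smul_eq_mul]
  field_simp
  ring
end

section
/- For every x ∈ [0,L] and every t ≥ 0, |c̄(x,t) − βDt/L − (c_I − βx(1 − x/(2L)) + βL/3)| ≤ (|β| L / 3) · exp(−(π/L)² D t); in particular, for each x ∈ [0,L], c̄(x,t) − βDt/L converges to c_I − βx(1 − x/(2L)) + βL/3 as t → ∞. -/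
/-!
The residual `c̄(x,t) − βDt/L − (c_I − βx(1 − x/(2L)) + βL/3)` is `−2βL` times the cosine series.
Bounding each cosine by `1` and each decay factor `exp(−(nπ/L)² D t)` by the slowest one
`exp(−(π/L)² D t)` leaves `exp(−(π/L)² D t) · ∑ 1/(n²π²) = exp(−(π/L)² D t) / 6` by Basel.
-/

open Real Filter

theorem hasSum_one_div_nat_add_one_sq_mul_pi_sq :
    HasSum (fun n : ℕ => 1 / (((n : ℝ) + 1) ^ 2 * π ^ 2)) (1 / 6) := by
  have basel : HasSum (fun n : ℕ => 1 / ((n : ℝ) + 1) ^ 2) (π ^ 2 / 6) := by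
    simpa using (hasSum_nat_add_iff' 1).mpr hasSum_zeta_two
  have hπ : π ^ 2 / 6 / π ^ 2 = 1 / 6 := by field_simp
  rw [← hπ]
  exact (basel.div_const _).congr_fun fun n => by rw [div_div]

theorem exp_neg_nat_add_one_mul_sq_le (k s : ℝ) (hs : 0 ≤ s) (n : ℕ) :
    exp (-(((n : ℝ) + 1) * k) ^ 2 * s) ≤ exp (-k ^ 2 * s) := by
  have hn : (1 : ℝ) ≤ ((n : ℝ) + 1) ^ 2 := one_le_pow₀ (by linarith [n.cast_nonneg (α := ℝ)])
  refine exp_le_exp.mpr ?_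
  nlinarith [mul_nonneg (mul_nonneg (sub_nonneg.mpr hn) (sq_nonneg k)) hs]

theorem abs_tsum_cos_mul_exp_le (L D x t : ℝ) (hDt : 0 ≤ D * t) :
    |∑' n : ℕ, (1 / (((n : ℝ) + 1) ^ 2 * π ^ 2)) * cos (((n : ℝ) + 1) * π * x / L) *
        exp (-((((n : ℝ) + 1) * π / L) ^ 2 * D * t))| ≤
      exp (-(π / L) ^ 2 * D * t) / 6 := by
  have hE := hasSum_one_div_nat_add_one_sq_mul_pi_sq.mul_right (exp (-(π / L) ^ 2 * D * t))
  rw [← Real.norm_eq_abs]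
  refine (tsum_of_norm_bounded hE fun n => ?_).trans_eq (by ring)
  have decay : exp (-((((n : ℝ) + 1) * π / L) ^ 2 * D * t)) ≤ exp (-(π / L) ^ 2 * D * t) := by
    simpa only [mul_div_assoc, mul_assoc, neg_mul] using
      exp_neg_nat_add_one_mul_sq_le (π / L) (D * t) hDt n
  rw [Real.norm_eq_abs, abs_mul, abs_mul, abs_of_nonneg (by positivity),
    abs_of_pos (exp_pos _)]
  calc _ ≤ 1 / (((n : ℝ) + 1) ^ 2 * π ^ 2) * 1 * exp (-(π / L) ^ 2 * D * t) := by
        gcongr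
        exact abs_cos_le_one _
    _ = _ := by ring

/-- For every `x ∈ [0,L]` and `t ≥ 0`,
`|c̄(x,t) − βDt/L − (c_I − βx(1 − x/(2L)) + βL/3)| ≤ (|β| L / 3) · exp(−(π/L)² D t)`;
in particular, for each `x ∈ [0,L]`, `c̄(x,t) − βDt/L` converges to
`c_I − βx(1 − x/(2L)) + βL/3` as `t → ∞`. -/
theorem stmt_11 (L D β cI : ℝ) (hL : 0 < L) (hD : 0 < D)
    (cbar : ℝ × ℝ → ℝ)
    (hcbar : ∀ x t : ℝ, cbar (x, t) =
      cI - β * x * (1 - x / (2 * L)) + β * D * t / L +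
        2 * β * L * (1 / 6 -
          ∑' n : ℕ, (1 / (((n : ℝ) + 1) ^ 2 * Real.pi ^ 2)) *
            Real.cos (((n : ℝ) + 1) * Real.pi * x / L) *
            Real.exp (-((((n : ℝ) + 1) * Real.pi / L) ^ 2 * D * t))) ) :
    (∀ x : ℝ, 0 ≤ x → x ≤ L → ∀ t : ℝ, 0 ≤ t →
      |cbar (x, t) - β * D * t / L -
          (cI - β * x * (1 - x / (2 * L)) + β * L / 3)| ≤
        |β| * L / 3 * Real.exp (-(Real.pi / L) ^ 2 * D * t)) ∧
    (∀ x : ℝ, 0 ≤ x → x ≤ L →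
      Tendsto (fun t : ℝ => cbar (x, t) - β * D * t / L) atTop
        (nhds (cI - β * x * (1 - x / (2 * L)) + β * L / 3))) := by
  have bound : ∀ x t : ℝ, 0 ≤ t →
      |cbar (x, t) - β * D * t / L - (cI - β * x * (1 - x / (2 * L)) + β * L / 3)| ≤
        |β| * L / 3 * exp (-(π / L) ^ 2 * D * t) := by
    intro x t ht
    have series := abs_tsum_cos_mul_exp_le L D x t (mul_nonneg hD.le ht)
    rw [hcbar, show ∀ a b c S : ℝ, a - β * b * c + β * D * t / L + 2 * β * L * (1 / 6 - S)
        - β * D * t / L - (a - β * b * c + β * L / 3) = -(2 * β * L) * S by intros; ring,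
      abs_mul, abs_neg, abs_mul, abs_mul, abs_two, abs_of_pos hL]
    calc _ ≤ 2 * |β| * L * (exp (-(π / L) ^ 2 * D * t) / 6) := by gcongr
      _ = _ := by ring
  refine ⟨fun x _ _ t ht => bound x t ht, fun x _ _ => ?_⟩
  have decay : Tendsto (fun t : ℝ => |β| * L / 3 * exp (-(π / L) ^ 2 * D * t)) atTop (nhds 0) := by
    have rate : -(π / L) ^ 2 * D < 0 :=
      mul_neg_of_neg_of_pos (neg_neg_of_pos (by positivity)) hD
    simpa using (tendsto_exp_atBot.comp (tendsto_id.const_mul_atTop_of_neg rate)).const_mul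
      (|β| * L / 3)
  rw [tendsto_iff_norm_sub_tendsto_zero]
  refine squeeze_zero' (.of_forall fun t => norm_nonneg _) ?_ decay
  filter_upwards [eventually_ge_atTop 0] with t ht
  exact (Real.norm_eq_abs _).trans_le (bound x t ht)
end
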